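/- arXiv:1011.0116 — 3 statements merged into one kernel-verified Lean document; each statement's English description precedes it below -/
import Mathlib

section
/- The determinant of the matrix A equals (-1)^r. In particular, A is unimodular. -/
open Matrix

/-!
Write `A = D + J`, where `J` is the all-ones matrix and `D` is diagonal with entries `-1` (first
`r`) and `1` (last `r`). Since `D² = 1`, we have `D + J = D (1 + d 𝟙ᵀ)` with `d` the diagonal of
`D`, so the matrix determinant lemma gives `det A = (∏ dᵢ) (1 + ∑ dᵢ) = (-1)^r (1 + 0)`.
-/

namespace Matrix

variable {m R : Type*} [Fintype m] [DecidableEq m] [CommRing R]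

theorem diagonal_add_vecMulVec_one_one {d : m → R} (hd : ∀ i, d i * d i = 1) :
    diagonal d + vecMulVec 1 1 = diagonal d * (1 + vecMulVec d 1) := by
  ext i j
  rw [Matrix.add_apply, diagonal_mul, Matrix.add_apply, vecMulVec_apply, vecMulVec_apply,
    one_apply, diagonal_apply, Pi.one_apply, Pi.one_apply, mul_one, mul_one]
  split_ifs with hij
  · subst hij
    linear_combination -hd i
  · rw [zero_add, zero_add, hd]

theorem det_diagonal_add_vecMulVec_one_one {d : m → R} (hd : ∀ i, d i * d i = 1) :
    (diagonal d + vecMulVec 1 1).det = (∏ i, d i) * (1 + ∑ i, d i) := by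
  rw [diagonal_add_vecMulVec_one_one hd, det_mul, det_diagonal, vecMulVec_eq (Fin 1),
    det_one_add_replicateCol_mul_replicateRow, one_dotProduct]

end Matrix

def signVector (R : Type*) [CommRing R] (r : ℕ) (i : Fin (2 * r)) : R :=
  if (i : ℕ) < r then -1 else 1

section SignVector

variable {R : Type*} [CommRing R]

theorem signVector_mul_self (r : ℕ) (i : Fin (2 * r)) :
    signVector R r i * signVector R r i = 1 := by
  unfold signVector; split_ifs <;> simp

theorem sum_signVector (r : ℕ) : ∑ i, signVector R r i = 0 := by
  simp only [signVector]
  rw [Fin.sum_univ_eq_sum_range (fun i => if i < r then (-1 : R) else 1), two_mul,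
    Finset.sum_range_add, Finset.sum_ite_of_true fun _ => Finset.mem_range.1]
  simp

theorem prod_signVector (r : ℕ) : ∏ i, signVector R r i = (-1) ^ r := by
  simp only [signVector]
  rw [Fin.prod_univ_eq_prod_range (fun i => if i < r then (-1 : R) else 1), two_mul,
    Finset.prod_range_add, Finset.prod_ite_of_true fun _ => Finset.mem_range.1]
  simp

end SignVector

theorem det_A_eq_neg_one_pow_general (r : ℕ)
    (A : Matrix (Fin (2 * r)) (Fin (2 * r)) ℤ)
    (hA : ∀ i j, A i j = if i = j then (if (i : ℕ) < r then 0 else 2) else 1) :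
    A.det = (-1) ^ r ∧ IsUnit A.det := by
  have hA' : A = diagonal (signVector ℤ r) + vecMulVec 1 1 := by
    ext i j
    rw [hA, Matrix.add_apply, diagonal_apply, vecMulVec_apply, signVector]
    split_ifs <;> simp_all
  have hdet : A.det = (-1) ^ r := by
    rw [hA', det_diagonal_add_vecMulVec_one_one (signVector_mul_self r), prod_signVector,
      sum_signVector, add_zero, mul_one]
  exact ⟨hdet, hdet ▸ isUnit_neg_one.pow r⟩

/-- For a positive integer `r`, let `A` be the symmetric `(2r) × (2r)` integer matrix whose
first `r` diagonal entries are `0`, whose last `r` diagonal entries are `2`, and all of whose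
off-diagonal entries are `1`.  Then `det A = (-1)^r`; in particular `A` is unimodular. -/
theorem det_A_eq_neg_one_pow (r : ℕ) (hr : 0 < r)
    (A : Matrix (Fin (2 * r)) (Fin (2 * r)) ℤ)
    (hA : ∀ i j, A i j = if i = j then (if (i : ℕ) < r then 0 else 2) else 1) :
    A.det = (-1) ^ r ∧ IsUnit A.det :=
  det_A_eq_neg_one_pow_general r A hA
end

section
/- Upon diagonalizing A over the real numbers, the numbers of +1 and −1 entries on the diagonal are equal: there exists an invertible real (2r)×(2r) matrix P such that Pᵀ A P is the diagonal matrix whose first r diagonal entries are +1 and whose last r diagonal entries are −1. In particular, the signature of A is zero. -/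
open Matrix

noncomputable section SigAux

variable (r : ℕ)

private def Jmat : Matrix (Fin r) (Fin r) ℝ := Matrix.of fun _ _ => 1

private def mA (a b : ℝ) : Matrix (Fin r) (Fin r) ℝ :=
  a • (1 : Matrix (Fin r) (Fin r) ℝ) + b • Jmat r

private lemma Jmat_mul_Jmat : Jmat r * Jmat r = (r : ℝ) • Jmat r := by
  ext i j; simp [Jmat, Matrix.mul_apply, Matrix.smul_apply]

private lemma mA_mul (a b c d : ℝ) :
    mA r a b * mA r c d = mA r (a * c) (a * d + b * c + b * d * r) := by
  have h1 : Jmat r * 1 = Jmat r := by simp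
  have h2 : (1 : Matrix (Fin r) (Fin r) ℝ) * Jmat r = Jmat r := by simp
  simp only [mA, Matrix.add_mul, Matrix.mul_add, Matrix.smul_mul, Matrix.mul_smul,
    Jmat_mul_Jmat, smul_smul, one_mul, mul_one, h1, h2]
  module

private lemma mA_add (a b c d : ℝ) :
    mA r a b + mA r c d = mA r (a + c) (b + d) := by
  simp only [mA]; module

private lemma mA_transpose (a b : ℝ) : (mA r a b)ᵀ = mA r a b := by
  have : (Jmat r)ᵀ = Jmat r := by ext i j; simp [Jmat]
  simp only [mA, Matrix.transpose_add, Matrix.transpose_smul, Matrix.transpose_one, this]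

private lemma mA_congr {a b a' b' : ℝ} (h1 : a = a') (h2 : b = b') :
    mA r a b = mA r a' b' := by rw [h1, h2]

private def cst : ℝ := (2 * Real.sqrt 2)⁻¹

private lemma cst_sq : cst * cst = 8⁻¹ := by
  rw [cst, ← mul_inv]
  congr 1
  rw [mul_mul_mul_comm]
  norm_num [Real.mul_self_sqrt]

private def PPb : Matrix (Fin r ⊕ Fin r) (Fin r ⊕ Fin r) ℝ :=
  fromBlocks (mA r cst (-cst)) (mA r (3*cst) cst) (mA r (-(3*cst)) cst) (mA r (-cst) (-cst))

private def AAb : Matrix (Fin r ⊕ Fin r) (Fin r ⊕ Fin r) ℝ :=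
  fromBlocks (mA r (-1) 1) (mA r 0 1) (mA r 0 1) (mA r 1 1)

private lemma key : (PPb r)ᵀ * AAb r * PPb r = fromBlocks 1 0 0 (-1) := by
  have h1 : (1 : Matrix (Fin r) (Fin r) ℝ) = mA r 1 0 := by simp [mA]
  have h0 : (0 : Matrix (Fin r) (Fin r) ℝ) = mA r 0 0 := by simp [mA]
  have hm1 : (-1 : Matrix (Fin r) (Fin r) ℝ) = mA r (-1) 0 := by
    rw [h1]; simp only [mA]; module
  have hc := cst_sq
  rw [PPb, AAb, fromBlocks_transpose, mA_transpose, mA_transpose, mA_transpose, mA_transpose,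
    fromBlocks_multiply, fromBlocks_multiply]
  rw [hm1, h1, h0]
  simp only [mA_mul, mA_add]
  rw [fromBlocks_inj]
  refine ⟨?_, ?_, ?_, ?_⟩ <;> apply mA_congr <;> (try linear_combination (8:ℝ)*hc) <;> (try linear_combination (-8:ℝ)*hc) <;> (try linear_combination ((8:ℝ)*(r:ℝ))*hc) <;> (try linear_combination (-(8:ℝ)*(r:ℝ))*hc) <;> ring_nf

end SigAux

/-- For a positive integer `r`, let `A` be the symmetric `(2r) × (2r)` integer matrix whose
first `r` diagonal entries are `0`, whose last `r` diagonal entries are `2`, and all of whose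
off-diagonal entries are `1`.  Diagonalizing `A` over `ℝ`, the numbers of `+1` and `-1`
diagonal entries are equal: there is an invertible real matrix `P` with `Pᵀ A P` equal to the
diagonal matrix with first `r` entries `+1` and last `r` entries `-1`.  In particular the
signature of `A` is zero. -/
theorem A_diagonalizes_with_zero_signature (r : ℕ) (hr : 0 < r)
    (A : Matrix (Fin (2 * r)) (Fin (2 * r)) ℤ)
    (hA : ∀ i j, A i j = if i = j then (if (i : ℕ) < r then 0 else 2) else 1) :
    ∃ P : Matrix (Fin (2 * r)) (Fin (2 * r)) ℝ, IsUnit P ∧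
      Pᵀ * A.map (Int.cast : ℤ → ℝ) * P =
        Matrix.diagonal (fun i : Fin (2 * r) => if (i : ℕ) < r then (1 : ℝ) else -1) := by
  classical
  set e : Fin (2 * r) ≃ Fin r ⊕ Fin r :=
    (finCongr (two_mul r)).trans finSumFinEquiv.symm with he
  -- characterization of e
  have he_inl : ∀ (i : Fin (2 * r)) (a : Fin r), e i = Sum.inl a → (i : ℕ) = (a : ℕ) := by
    intro i a h
    have : i = e.symm (Sum.inl a) := by rw [← h, Equiv.symm_apply_apply]
    rw [this]
    simp [he, finSumFinEquiv_apply_left]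
  have he_inr : ∀ (i : Fin (2 * r)) (a : Fin r), e i = Sum.inr a → (i : ℕ) = r + (a : ℕ) := by
    intro i a h
    have : i = e.symm (Sum.inr a) := by rw [← h, Equiv.symm_apply_apply]
    rw [this]
    simp [he, finSumFinEquiv_apply_right]
    omega
  refine ⟨(PPb r).submatrix e e, ?_, ?_⟩
  · rw [Matrix.isUnit_iff_isUnit_det, Matrix.det_submatrix_equiv_self, isUnit_iff_ne_zero]
    intro hdet
    have hk := congrArg Matrix.det (key r)
    rw [Matrix.det_mul, Matrix.det_mul, Matrix.det_transpose, hdet,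
      Matrix.det_fromBlocks_zero₂₁] at hk
    simp [Matrix.det_neg] at hk
    exact pow_ne_zero r (by norm_num : (-1:ℝ) ≠ 0) hk.symm
  · have hAeq : A.map (Int.cast : ℤ → ℝ) = (AAb r).submatrix e e := by
      ext i j
      rw [Matrix.map_apply, hA, Matrix.submatrix_apply]
      rcases h1 : e i with a | a <;> rcases h2 : e j with b | b
      · have hi := he_inl i a h1
        have hj := he_inl j b h2
        have hij : i = j ↔ a = b := by
          constructor
          · intro h; subst h; rw [h1] at h2; exact Sum.inl.injEq _ _ ▸ (by
              injection h2)
          · intro h; subst h; apply e.injective; rw [h1, h2]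
        simp only [AAb, fromBlocks_apply₁₁, mA, Matrix.add_apply, Matrix.smul_apply,
          Matrix.one_apply, Jmat, Matrix.of_apply]
        have hjr : (j : ℕ) < r := by have := b.isLt; omega
        by_cases h : i = j
        · simp [h, hij.mp h, hjr]
        · have hab : ¬ a = b := fun hh => h (hij.mpr hh)
          simp [h, hab]
      · have hi := he_inl i a h1
        have hj := he_inr j b h2
        have hij : i ≠ j := by
          intro h; subst h; rw [h1] at h2; exact absurd h2 (by simp)
        simp [AAb, mA, Jmat, hij, Matrix.one_apply]
      · have hi := he_inr i a h1
        have hij : i ≠ j := by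
          intro h; subst h; rw [h1] at h2; exact absurd h2 (by simp)
        simp [AAb, mA, Jmat, hij, Matrix.one_apply]
      · have hi := he_inr i a h1
        have hj := he_inr j b h2
        have hij : i = j ↔ a = b := by
          constructor
          · intro h; subst h; rw [h1] at h2; injection h2
          · intro h; subst h; apply e.injective; rw [h1, h2]
        have hjr : ¬ (j : ℕ) < r := by omega
        simp only [AAb, fromBlocks_apply₂₂, mA, Matrix.add_apply, Matrix.smul_apply,
          Matrix.one_apply, Jmat, Matrix.of_apply]
        by_cases h : i = j
        · simp [h, hij.mp h, hjr]
          norm_num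
        · have hab : ¬ a = b := fun hh => h (hij.mpr hh)
          simp [h, hab, hjr]
    have hDeq : Matrix.diagonal (fun i : Fin (2 * r) => if (i : ℕ) < r then (1 : ℝ) else -1)
        = (fromBlocks (1 : Matrix (Fin r) (Fin r) ℝ) 0 0 (-1)).submatrix e e := by
      ext i j
      rw [Matrix.submatrix_apply]
      rcases h1 : e i with a | a <;> rcases h2 : e j with b | b
      · have hi := he_inl i a h1
        have hij : i = j ↔ a = b := by
          constructor
          · intro h; subst h; rw [h1] at h2; injection h2
          · intro h; subst h; apply e.injective; rw [h1, h2]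
        have hjr : (j : ℕ) < r := by
          have := he_inl j b h2; have := b.isLt; omega
        by_cases h : i = j
        · simp [Matrix.diagonal_apply, h, hij.mp h, hjr, Matrix.one_apply]
        · have hab : ¬ a = b := fun hh => h (hij.mpr hh)
          simp [Matrix.diagonal_apply, h, hab, Matrix.one_apply]
      · have hij : i ≠ j := by
          intro h; subst h; rw [h1] at h2; exact absurd h2 (by simp)
        simp [Matrix.diagonal_apply, hij]
      · have hij : i ≠ j := by
          intro h; subst h; rw [h1] at h2; exact absurd h2 (by simp)
        simp [Matrix.diagonal_apply, hij]
      · have hi := he_inr i a h1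
        have hij : i = j ↔ a = b := by
          constructor
          · intro h; subst h; rw [h1] at h2; injection h2
          · intro h; subst h; apply e.injective; rw [h1, h2]
        have hjr : ¬ (j : ℕ) < r := by
          have := he_inr j b h2; omega
        by_cases h : i = j
        · simp [Matrix.diagonal_apply, h, hij.mp h, hjr, Matrix.one_apply]
        · have hab : ¬ a = b := fun hh => h (hij.mpr hh)
          simp [Matrix.diagonal_apply, h, hab, Matrix.one_apply]
    rw [hAeq, hDeq, Matrix.transpose_submatrix, Matrix.submatrix_mul_equiv,
      Matrix.submatrix_mul_equiv, ← key r]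
end

section
/- The symmetric bilinear form represented by the matrix A is isomorphic over ℤ to r copies of the hyperbolic form: there exists a (2r)×(2r) integer matrix P, invertible over ℤ (i.e., with an integer inverse), such that Pᵀ A P equals the block-diagonal matrix consisting of r copies of the 2×2 hyperbolic matrix H = [[0,1],[1,0]]. -/
open Matrix

/-- For a positive integer `r`, let `A` be the symmetric `(2r) × (2r)` integer matrix whose
first `r` diagonal entries are `0`, whose last `r` diagonal entries are `2`, and all of whose
off-diagonal entries are `1`.  The symmetric bilinear form represented by `A` is isomorphic
over `ℤ` to `r` copies of the hyperbolic form `H = !![0,1;1,0]`: there is an integer matrix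
`P`, invertible over `ℤ`, with `Pᵀ A P` the block-diagonal matrix of `r` copies of `H`. -/
theorem A_isomorphic_to_r_hyperbolics (r : ℕ) (hr : 0 < r)
    (A : Matrix (Fin (2 * r)) (Fin (2 * r)) ℤ)
    (hA : ∀ i j, A i j = if i = j then (if (i : ℕ) < r then 0 else 2) else 1) :
    ∃ P : Matrix (Fin (2 * r)) (Fin (2 * r)) ℤ, IsUnit P.det ∧
      Pᵀ * A * P =
        Matrix.reindex finProdFinEquiv finProdFinEquiv
          (Matrix.blockDiagonal fun _ : Fin r => !![(0 : ℤ), 1; 1, 0]) := by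
  set e : Fin r ⊕ Fin r ≃ Fin (2 * r) :=
    finSumFinEquiv.trans (finCongr (two_mul r).symm) with he
  set K : Matrix (Fin r) (Fin r) ℤ := Matrix.of fun _ _ => 1 with hK
  set U : Matrix (Fin r) (Fin r) ℤ := Matrix.of fun x a => if x ≤ a then 1 else 0 with hUdef
  set A₀ : Matrix (Fin r ⊕ Fin r) (Fin r ⊕ Fin r) ℤ :=
    fromBlocks (K - 1) K K (K + 1) with hA₀
  set M : Matrix (Fin r ⊕ Fin r) (Fin r ⊕ Fin r) ℤ :=
    fromBlocks U (-1) (1 - U) 1 with hM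
  set c : Fin (2 * r) → Fin r ⊕ Fin r := fun j =>
    if (finProdFinEquiv.symm j).1 = 0 then Sum.inl (finProdFinEquiv.symm j).2
    else Sum.inr (finProdFinEquiv.symm j).2 with hc
  -- values of e
  have heL : ∀ k : Fin r, ((e (Sum.inl k) : Fin (2 * r)) : ℕ) = (k : ℕ) := by
    intro k
    simp [he, finSumFinEquiv_apply_left]
  have heR : ∀ k : Fin r, ((e (Sum.inr k) : Fin (2 * r)) : ℕ) = r + (k : ℕ) := by
    intro k
    simp [he, finSumFinEquiv_apply_right]
    omega
  -- the key entrywise identity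
  have hU : U + Uᵀ = K + 1 := by
    ext x a
    simp only [hUdef, hK, Matrix.add_apply, Matrix.transpose_apply, Matrix.of_apply,
      Matrix.one_apply, Fin.le_def, Fin.ext_iff]
    split_ifs <;> omega
  -- identification of A
  have hAe : A = A₀.submatrix ⇑e.symm ⇑e.symm := by
    have h1 : A.submatrix ⇑e ⇑e = A₀ := by
      ext x y
      rcases x with k | k <;> rcases y with l | l <;>
        simp only [Matrix.submatrix_apply, hA, hA₀, Matrix.fromBlocks_apply₁₁,
          Matrix.fromBlocks_apply₁₂, Matrix.fromBlocks_apply₂₁, Matrix.fromBlocks_apply₂₂,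
          Equiv.apply_eq_iff_eq, Sum.inl.injEq, Sum.inr.injEq, hK, Matrix.of_apply,
          Matrix.sub_apply, Matrix.add_apply, Matrix.one_apply, reduceCtorEq]
      · rcases eq_or_ne k l with h | h
        · simp [h, heL]
        · simp [h]
      · simp
      · simp
      · rcases eq_or_ne k l with h | h
        · simp [h, heR]
        · simp [h]
    rw [← h1, Matrix.submatrix_submatrix, Equiv.self_comp_symm, Matrix.submatrix_id_id]
  -- the core block computation
  have hcore : Mᵀ * A₀ * M = fromBlocks 0 1 1 0 := by
    have hMT : Mᵀ = fromBlocks Uᵀ (1 - Uᵀ) (-1) 1 := by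
      rw [hM, Matrix.fromBlocks_transpose]
      congr 1 <;> simp
    rw [hMT, hA₀, hM, Matrix.fromBlocks_multiply, Matrix.fromBlocks_multiply]
    have tl : (Uᵀ * (K - 1) + (1 - Uᵀ) * K) * U + (Uᵀ * K + (1 - Uᵀ) * (K + 1)) * (1 - U)
        = 0 := by
      have h2 : (Uᵀ * (K - 1) + (1 - Uᵀ) * K) * U + (Uᵀ * K + (1 - Uᵀ) * (K + 1)) * (1 - U)
          = K + 1 - (U + Uᵀ) := by noncomm_ring
      rw [h2, hU, sub_self]
    have tr : (Uᵀ * (K - 1) + (1 - Uᵀ) * K) * (-1) + (Uᵀ * K + (1 - Uᵀ) * (K + 1)) * 1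
        = 1 := by noncomm_ring
    have bl : (-1 * (K - 1) + 1 * K) * U + (-1 * K + 1 * (K + 1)) * (1 - U) = 1 := by
      noncomm_ring
    have br : (-1 * (K - 1) + 1 * K) * (-1) + (-1 * K + 1 * (K + 1)) * 1 = 0 := by
      noncomm_ring
    rw [tl, tr, bl, br]
  set P : Matrix (Fin (2 * r)) (Fin (2 * r)) ℤ := M.submatrix ⇑e.symm c with hP
  have hmain : Pᵀ * A * P =
      Matrix.reindex finProdFinEquiv finProdFinEquiv
        (Matrix.blockDiagonal fun _ : Fin r => !![(0 : ℤ), 1; 1, 0]) := by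
    rw [hP, Matrix.transpose_submatrix, hAe, Matrix.submatrix_mul_equiv,
      Matrix.submatrix_mul_equiv, hcore]
    ext i j
    simp only [Matrix.submatrix_apply, Matrix.reindex_apply, hc]
    generalize finProdFinEquiv.symm i = p
    generalize finProdFinEquiv.symm j = q
    obtain ⟨s, a⟩ := p
    obtain ⟨t, b⟩ := q
    fin_cases s <;> fin_cases t <;>
      simp [Matrix.blockDiagonal_apply, Matrix.one_apply]
  refine ⟨P, ?_, hmain⟩
  have h1 : IsUnit ((Pᵀ * A).det * P.det) := by
    rw [← Matrix.det_mul, hmain, Matrix.det_reindex_self, Matrix.det_blockDiagonal]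
    simp only [Matrix.det_fin_two_of, Finset.prod_const, Finset.card_univ, Fintype.card_fin]
    norm_num
    exact isUnit_one.neg.pow r
  exact isUnit_of_mul_isUnit_right h1
end
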